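/- Define A = ⋃_{n=1}^∞ [1/(n+1)!, 1/(n!·√(n+1))] ⊆ ℝ. Then for every n ∈ ℕ, n!·λ(A ∩ [0, 1/n!]) ≤ 1/√(n+1), and consequently lim_{n→∞} n!·λ(A ∩ [0, 1/n!]) = 0. -/
import Mathlib


open MeasureTheory Set Filter

/-- The set `A = ⋃_{n ≥ 1} [1/(n+1)!, 1/(n!·√(n+1))]` (indexed here by `n + 1`). -/
noncomputable def exampleSet : Set ℝ :=
  ⋃ n : ℕ, Set.Icc (1 / ((n + 2).factorial : ℝ))
    (1 / (((n + 1).factorial : ℝ) * Real.sqrt ((n : ℝ) + 2)))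

lemma exampleSet_subset (n : ℕ) :
    exampleSet ∩ Set.Icc 0 (1 / (n.factorial : ℝ)) ⊆
      Set.Icc 0 (1 / ((n.factorial : ℝ) * Real.sqrt ((n : ℝ) + 1))) ∪
        {1 / (n.factorial : ℝ)} := by
  rintro x ⟨hxA, hx0, hxn⟩
  rcases eq_or_lt_of_le hxn with heq | hlt
  · exact Or.inr heq
  · left
    simp only [exampleSet, Set.mem_iUnion] at hxA
    obtain ⟨m, hm1, hm2⟩ := hxA
    refine ⟨hx0, ?_⟩
    have hfm2 : (0 : ℝ) < ((m + 2).factorial : ℝ) := by positivity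
    have hfn : (0 : ℝ) < (n.factorial : ℝ) := by positivity
    -- from 1/(m+2)! ≤ x < 1/n! deduce n! < (m+2)!, so n < m+2, n ≤ m+1
    have h1 : (n.factorial : ℝ) < ((m + 2).factorial : ℝ) := by
      have := lt_of_le_of_lt hm1 hlt
      rw [div_lt_div_iff₀ hfm2 hfn] at this
      linarith
    have hnm : n ≤ m + 1 := by
      by_contra h
      push_neg at h
      have : (m + 2).factorial ≤ n.factorial := Nat.factorial_le (by omega)
      exact absurd h1 (not_lt.mpr (by exact_mod_cast this))
    -- then n! √(n+1) ≤ (m+1)! √(m+2)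
    have hsq : Real.sqrt ((n : ℝ) + 1) ≤ Real.sqrt ((m : ℝ) + 2) := by
      apply Real.sqrt_le_sqrt
      have : (n : ℝ) ≤ (m : ℝ) + 1 := by exact_mod_cast hnm
      linarith
    have hfle : (n.factorial : ℝ) ≤ ((m + 1).factorial : ℝ) := by
      exact_mod_cast Nat.factorial_le hnm
    have hsqpos : (0 : ℝ) < Real.sqrt ((n : ℝ) + 1) := by
      apply Real.sqrt_pos.mpr; positivity
    have hmul : (n.factorial : ℝ) * Real.sqrt ((n : ℝ) + 1) ≤
        ((m + 1).factorial : ℝ) * Real.sqrt ((m : ℝ) + 2) := by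
      apply mul_le_mul hfle hsq (le_of_lt hsqpos) (by positivity)
    calc x ≤ 1 / (((m + 1).factorial : ℝ) * Real.sqrt ((m : ℝ) + 2)) := hm2
      _ ≤ 1 / ((n.factorial : ℝ) * Real.sqrt ((n : ℝ) + 1)) := by
          apply one_div_le_one_div_of_le (by positivity) hmul

lemma exampleSet_bound (n : ℕ) :
    (n.factorial : ℝ) *
        (volume (exampleSet ∩ Set.Icc 0 (1 / (n.factorial : ℝ)))).toReal ≤
      1 / Real.sqrt ((n : ℝ) + 1) := by
  have hfn : (0 : ℝ) < (n.factorial : ℝ) := by positivity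
  have hsq : (0 : ℝ) < Real.sqrt ((n : ℝ) + 1) := by
    apply Real.sqrt_pos.mpr; positivity
  have hvol : volume (exampleSet ∩ Set.Icc 0 (1 / (n.factorial : ℝ))) ≤
      ENNReal.ofReal (1 / ((n.factorial : ℝ) * Real.sqrt ((n : ℝ) + 1))) := by
    calc volume (exampleSet ∩ Set.Icc 0 (1 / (n.factorial : ℝ)))
        ≤ volume (Set.Icc 0 (1 / ((n.factorial : ℝ) * Real.sqrt ((n : ℝ) + 1))) ∪
            {1 / (n.factorial : ℝ)}) := measure_mono (exampleSet_subset n)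
      _ ≤ volume (Set.Icc 0 (1 / ((n.factorial : ℝ) * Real.sqrt ((n : ℝ) + 1)))) +
            volume ({1 / (n.factorial : ℝ)} : Set ℝ) := measure_union_le _ _
      _ = ENNReal.ofReal (1 / ((n.factorial : ℝ) * Real.sqrt ((n : ℝ) + 1))) := by
          rw [Real.volume_Icc, Real.volume_singleton, add_zero, sub_zero]
  have htr : (volume (exampleSet ∩ Set.Icc 0 (1 / (n.factorial : ℝ)))).toReal ≤
      1 / ((n.factorial : ℝ) * Real.sqrt ((n : ℝ) + 1)) :=
    ENNReal.toReal_le_of_le_ofReal (by positivity) hvol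
  calc (n.factorial : ℝ) *
        (volume (exampleSet ∩ Set.Icc 0 (1 / (n.factorial : ℝ)))).toReal
      ≤ (n.factorial : ℝ) * (1 / ((n.factorial : ℝ) * Real.sqrt ((n : ℝ) + 1))) :=
        mul_le_mul_of_nonneg_left htr (le_of_lt hfn)
    _ = 1 / Real.sqrt ((n : ℝ) + 1) := by
        field_simp

theorem exampleSet_dispersion :
    (∀ n : ℕ, (n.factorial : ℝ) *
        (volume (exampleSet ∩ Set.Icc 0 (1 / (n.factorial : ℝ)))).toReal ≤
      1 / Real.sqrt ((n : ℝ) + 1)) ∧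
    Tendsto (fun n : ℕ => (n.factorial : ℝ) *
        (volume (exampleSet ∩ Set.Icc 0 (1 / (n.factorial : ℝ)))).toReal)
      atTop (nhds 0) := by
  refine ⟨exampleSet_bound, ?_⟩
  have hb : Tendsto (fun n : ℕ => 1 / Real.sqrt ((n : ℝ) + 1)) atTop (nhds 0) := by
    simp only [one_div]
    apply Tendsto.comp tendsto_inv_atTop_zero
    have h2 : Tendsto Real.sqrt atTop atTop := by
      rw [funext Real.sqrt_eq_rpow]
      exact tendsto_rpow_atTop (by norm_num)
    exact h2.comp (tendsto_atTop_add_const_right _ 1 tendsto_natCast_atTop_atTop)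
  apply squeeze_zero (fun n => ?_) exampleSet_bound hb
  positivity
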